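/- Fix t̂ > τ and let f̂(u) = f_{c,1}(u) for 0 < u ≤ τ, f̂(u) = f_{c,2}(u) for τ < u ≤ t̂, and f̂(u) = 0 for u > t̂ (negative-feedback release rate). Then the fraction of recyclable molecules satisfies lim_{t→∞} ∫₀^t f̂(u) H(t − u) du + ∫_{t̂}^∞ f_{c,2}(t) dt = C Σ_n c_n [H_∞ τ + (1 − H_∞)(exp(−D_v λ_n² (t̂ − τ)) − exp(−D_v λ_n² t̂))/(D_v λ_n²)]. (Theorem 4, case t̂ > τ, the fraction χ₂(t̂) = β₁(t→∞) + β₂(t̂).) -/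

import Mathlib

open MeasureTheory Filter Topology

noncomputable def erf (x : ℝ) : ℝ := (2 / Real.sqrt Real.pi) * ∫ u in (0:ℝ)..x, Real.exp (-u ^ 2)

noncomputable def erfc (x : ℝ) : ℝ := 1 - erf x

open Set Real

/-!
For `t > t̂` the convolution only sees `f̂` on `(0, t̂]`, where it is integrable, so dominated
convergence and `H(t) → H_∞` give the limit `H_∞ ∫₀^t̂ f̂`; `H` converges because `erf → 1` and
`exp (ζ t) erfc (γ √(D_σ t)) ≤ (2/√π) exp (-k_d t)`. The integrals of `f_{c,1}` and `f_{c,2}` are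
then taken mode by mode: each mode is nonnegative with integral at most `τ`, and `∑ |c_n| < ∞`.
The three modal integrals over `(0, τ]`, `(τ, t̂]` and `(t̂, ∞)` add up to `τ`, which turns
`H_∞ (I₁ + I₂) + I₃` into the stated closed form.
-/

lemma integrable_exp_neg_sq : Integrable fun u : ℝ => exp (-u ^ 2) := by
  simpa using integrable_exp_neg_mul_sq one_pos

lemma integral_exp_neg_sq_Ioi_zero : ∫ u in Ioi (0:ℝ), exp (-u ^ 2) = √π / 2 := by
  simpa using integral_gaussian_Ioi 1

@[fun_prop]
lemma continuous_erf : Continuous erf :=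
  continuous_const.mul <| intervalIntegral.continuous_primitive
    (fun _ _ => integrable_exp_neg_sq.intervalIntegrable) 0

@[fun_prop]
lemma continuous_erfc : Continuous erfc :=
  continuous_const.sub continuous_erf

lemma tendsto_erf_atTop : Tendsto erf atTop (𝓝 1) := by
  have h := intervalIntegral_tendsto_integral_Ioi 0 integrable_exp_neg_sq.integrableOn tendsto_id
  rw [integral_exp_neg_sq_Ioi_zero] at h
  have h2 : 2 / √π * (√π / 2) = 1 := by field_simp
  rw [← h2]
  exact h.const_mul (2 / √π)

lemma erfc_eq_integral_Ioi (x : ℝ) : erfc x = 2 / √π * ∫ u in Ioi x, exp (-u ^ 2) := by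
  have h := intervalIntegral.integral_interval_add_Ioi (a := 0) (b := x)
    integrable_exp_neg_sq.integrableOn integrable_exp_neg_sq.integrableOn
  rw [integral_exp_neg_sq_Ioi_zero] at h
  rw [erfc, erf, ← sub_eq_of_eq_add' h.symm]
  field_simp

lemma erfc_nonneg (x : ℝ) : 0 ≤ erfc x := by
  rw [erfc_eq_integral_Ioi]
  exact mul_nonneg (by positivity) (setIntegral_nonneg measurableSet_Ioi fun u _ => (exp_pos _).le)

lemma erfc_le_exp_neg_sq {x : ℝ} (hx : 1 ≤ x) : erfc x ≤ 2 / √π * exp (-x ^ 2) := by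
  rw [erfc_eq_integral_Ioi]
  gcongr
  have hint : IntegrableOn (fun u => exp (-x ^ 2 + x) * exp (-u)) (Ioi x) :=
    (integrableOn_exp_neg_Ioi x).const_mul _
  calc ∫ u in Ioi x, exp (-u ^ 2) ≤ ∫ u in Ioi x, exp (-x ^ 2 + x) * exp (-u) := by
        refine setIntegral_mono_on integrable_exp_neg_sq.integrableOn hint measurableSet_Ioi
          fun u (hu : x < u) => ?_
        rw [← exp_add]
        -- `u² - x² = (u - x)(u + x) ≥ u - x`
        exact exp_le_exp.2 (by nlinarith)
    _ = exp (-x ^ 2) := by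
        rw [integral_const_mul, integral_exp_neg_Ioi, ← exp_add]
        ring_nf

lemma tendsto_exp_mul_erfc_atTop {γ D k : ℝ} (hγ : 0 < γ) (hD : 0 < D) (hk : 0 < k) :
    Tendsto (fun t => exp ((γ ^ 2 * D - k) * t) * erfc (γ * √(D * t))) atTop (𝓝 0) := by
  have hlarge : ∀ᶠ t in atTop, 1 ≤ γ * √(D * t) :=
    ((tendsto_sqrt_atTop.comp (tendsto_id.const_mul_atTop hD)).const_mul_atTop
      hγ).eventually_ge_atTop 1
  have hdecay : Tendsto (fun t => 2 / √π * exp (-k * t)) atTop (𝓝 0) := by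
    simpa using (tendsto_exp_atBot.comp
      (tendsto_id.const_mul_atTop_of_neg (neg_lt_zero.2 hk))).const_mul (2 / √π)
  refine squeeze_zero'
    (Eventually.of_forall fun t => mul_nonneg (exp_pos _).le (erfc_nonneg _)) ?_ hdecay
  filter_upwards [hlarge, eventually_ge_atTop 0] with t ht ht0
  calc exp ((γ ^ 2 * D - k) * t) * erfc (γ * √(D * t))
      ≤ exp ((γ ^ 2 * D - k) * t) * (2 / √π * exp (-(γ * √(D * t)) ^ 2)) := by
        gcongr; exact erfc_le_exp_neg_sq ht
    _ = 2 / √π * exp (-k * t) := by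
        rw [mul_pow, sq_sqrt (by positivity), mul_left_comm, ← exp_add]
        ring_nf

-- the `H` of the statement, with its formula used for every `t`
noncomputable def erfKernel (w γ Dσ kd ζ t : ℝ) : ℝ :=
  w / √(kd * Dσ) * erf (√(kd * t)) -
    w * γ / ζ * (exp (ζ * t) * erfc (γ * √(Dσ * t)) + γ * √(Dσ / kd) * erf (√(kd * t)) - 1)

lemma continuous_erfKernel (w γ Dσ kd ζ : ℝ) : Continuous (erfKernel w γ Dσ kd ζ) := by
  unfold erfKernel; fun_prop

lemma tendsto_erfKernel_atTop {w γ Dσ kd ζ : ℝ} (hγ : 0 < γ) (hDσ : 0 < Dσ) (hkd : 0 < kd)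
    (hζ : ζ = γ ^ 2 * Dσ - kd) :
    Tendsto (fun t => erfKernel w γ Dσ kd ζ t) atTop
      (𝓝 (w / √(Dσ * kd) - w * γ ^ 2 / ζ * √(Dσ / kd) + w * γ / ζ)) := by
  have herf : Tendsto (fun t => erf (√(kd * t))) atTop (𝓝 1) :=
    tendsto_erf_atTop.comp (tendsto_sqrt_atTop.comp (tendsto_id.const_mul_atTop hkd))
  have hexp : Tendsto (fun t => exp (ζ * t) * erfc (γ * √(Dσ * t))) atTop (𝓝 0) := by
    subst hζ; exact tendsto_exp_mul_erfc_atTop hγ hDσ hkd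
  have h := (herf.const_mul (w / √(kd * Dσ))).sub
    ((hexp.add (herf.const_mul (γ * √(Dσ / kd)))).sub_const 1 |>.const_mul (w * γ / ζ))
  have hval : w / √(kd * Dσ) * 1 - w * γ / ζ * (0 + γ * √(Dσ / kd) * 1 - 1) =
      w / √(Dσ * kd) - w * γ ^ 2 / ζ * √(Dσ / kd) + w * γ / ζ := by
    rw [mul_comm kd Dσ]
    ring
  rw [← hval]
  exact h

lemma intervalIntegral_mul_comp_sub_eq_of_forall_gt {f H : ℝ → ℝ} {T t : ℝ} (hT : 0 ≤ T)
    (hf : ∀ u, T < u → f u = 0) (htT : T ≤ t) :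
    ∫ u in 0..t, f u * H (t - u) = ∫ u in 0..T, f u * H (t - u) := by
  rw [intervalIntegral.integral_of_le (hT.trans htT), intervalIntegral.integral_of_le hT]
  refine setIntegral_eq_of_subset_of_forall_sdiff_eq_zero measurableSet_Ioc
    (Ioc_subset_Ioc_right htT) fun u hu => ?_
  have hTu : T < u := not_le.1 fun h => hu.2 ⟨hu.1.1, h⟩
  rw [hf u hTu, zero_mul]

theorem tendsto_intervalIntegral_mul_comp_sub {f H : ℝ → ℝ} {T L : ℝ} (hT : 0 ≤ T)
    (hfi : IntervalIntegrable f volume 0 T) (hf : ∀ u, T < u → f u = 0)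
    (hH : ContinuousOn H (Ioi 0)) (hHL : Tendsto H atTop (𝓝 L)) :
    Tendsto (fun t => ∫ u in 0..t, f u * H (t - u)) atTop (𝓝 ((∫ u in 0..T, f u) * L)) := by
  obtain ⟨s₀, hs₀⟩ := eventually_atTop.1 <| hHL.norm.eventually (gt_mem_nhds (lt_add_one ‖L‖))
  have hfi' : IntegrableOn f (Ioc 0 T) := (intervalIntegrable_iff_integrableOn_Ioc_of_le hT).1 hfi
  rw [← intervalIntegral.integral_mul_const]
  refine Tendsto.congr' (EventuallyEq.symm ?_) <|
    intervalIntegral.tendsto_integral_filter_of_dominated_convergence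
      (F := fun t u => f u * H (t - u)) (fun u => ‖f u‖ * (‖L‖ + 1)) ?_ ?_
      (hfi.norm.mul_const _) ?_
  · filter_upwards [eventually_ge_atTop T] with t ht
    exact intervalIntegral_mul_comp_sub_eq_of_forall_gt hT hf ht
  · filter_upwards [eventually_gt_atTop T] with t ht
    rw [uIoc_of_le hT]
    refine hfi'.aestronglyMeasurable.mul <| ContinuousOn.aestronglyMeasurable ?_ measurableSet_Ioc
    exact hH.comp (by fun_prop) fun u hu => sub_pos.2 (hu.2.trans_lt ht)
  · filter_upwards [eventually_ge_atTop (s₀ + T)] with t ht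
    refine Eventually.of_forall fun u hu => ?_
    rw [uIoc_of_le hT] at hu
    rw [norm_mul]
    exact mul_le_mul_of_nonneg_left (hs₀ _ (by linarith [hu.2])).le (norm_nonneg _)
  · exact Eventually.of_forall fun u _ =>
      (hHL.comp (tendsto_atTop_add_const_right _ (-u) tendsto_id)).const_mul (f u)

lemma hasSum_integral_tsum_mul {α : Type*} [MeasurableSpace α] {μ : Measure α} {c : ℕ → ℝ}
    {φ : ℕ → α → ℝ} {M : ℝ} (hc : Summable fun n => |c n|) (hφ : ∀ n, Integrable (φ n) μ)
    (hφ0 : ∀ n, 0 ≤ᵐ[μ] φ n) (hM : ∀ n, ∫ x, φ n x ∂μ ≤ M) :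
    HasSum (fun n => c n * ∫ x, φ n x ∂μ) (∫ x, ∑' n, c n * φ n x ∂μ) := by
  have hnorm : ∀ n, ∫ x, ‖c n * φ n x‖ ∂μ = |c n| * ∫ x, φ n x ∂μ := fun n => by
    rw [← integral_const_mul]
    refine integral_congr_ae ((hφ0 n).mono fun x hx => ?_)
    dsimp only
    rw [norm_mul, Real.norm_eq_abs, Real.norm_of_nonneg hx]
  have hsum : Summable fun n => ∫ x, ‖c n * φ n x‖ ∂μ := by
    refine (hc.mul_right M).of_nonneg_of_le (fun n => integral_nonneg fun x => norm_nonneg _)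
      fun n => ?_
    rw [hnorm]
    exact mul_le_mul_of_nonneg_left (hM n) (abs_nonneg _)
  simpa only [integral_const_mul] using
    hasSum_integral_of_summable_integral_norm (fun n => (hφ n).const_mul (c n)) hsum

lemma one_sub_exp_neg_mul_div_le {a x : ℝ} (ha : 0 < a) : (1 - exp (-(a * x))) / a ≤ x := by
  rw [div_le_iff₀ ha]
  linarith [add_one_le_exp (-(a * x))]

lemma one_sub_exp_neg_mul_mem_Icc {a u : ℝ} (ha : 0 ≤ a) (hu : 0 ≤ u) :
    1 - exp (-(a * u)) ∈ Icc 0 1 :=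
  ⟨sub_nonneg.2 (exp_le_one_iff.2 (neg_nonpos.2 (mul_nonneg ha hu))),
    sub_le_self _ (exp_pos _).le⟩

lemma exp_neg_mul_sub_sub_exp_neg_mul_nonneg {a τ : ℝ} (ha : 0 ≤ a) (hτ : 0 ≤ τ) (u : ℝ) :
    0 ≤ exp (-(a * (u - τ))) - exp (-(a * u)) :=
  sub_nonneg.2 (exp_le_exp.2 (by nlinarith))

lemma exp_neg_mul_sub_sub_exp_neg_mul_le {a τ u : ℝ} (ha : 0 ≤ a) (hτ : 0 ≤ τ) (hu : τ ≤ u) :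
    exp (-(a * (u - τ))) - exp (-(a * u)) ≤ 1 - exp (-(a * τ)) := by
  have hsplit : exp (-(a * u)) = exp (-(a * (u - τ))) * exp (-(a * τ)) := by
    rw [← exp_add]; ring_nf
  have hle : exp (-(a * (u - τ))) ≤ 1 := exp_le_one_iff.2 (by nlinarith)
  have hle' : exp (-(a * τ)) ≤ 1 := exp_le_one_iff.2 (by nlinarith)
  rw [hsplit]
  nlinarith [mul_nonneg (sub_nonneg.2 hle) (sub_nonneg.2 hle')]

lemma hasDerivAt_exp_neg_mul (a u : ℝ) :
    HasDerivAt (fun u => exp (-(a * u))) (-a * exp (-(a * u))) u := by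
  simpa [mul_comm] using ((hasDerivAt_id u).const_mul a).neg.exp

lemma hasDerivAt_exp_neg_mul_sub_sub_exp_neg_mul {a : ℝ} (ha : a ≠ 0) (τ u : ℝ) :
    HasDerivAt (fun u => -(exp (-(a * (u - τ))) - exp (-(a * u))) / a)
      (exp (-(a * (u - τ))) - exp (-(a * u))) u := by
  have h : HasDerivAt (fun u => -(exp (-(a * (u - τ))) - exp (-(a * u))) / a)
      (-(-a * exp (-(a * (u - τ))) - -a * exp (-(a * u))) / a) u :=
    (((hasDerivAt_exp_neg_mul a (u - τ)).comp_sub_const u τ).sub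
      (hasDerivAt_exp_neg_mul a u)).neg.div_const a
  exact h.congr_deriv (by field_simp; ring)

lemma integral_one_sub_exp_neg_mul {a : ℝ} (ha : a ≠ 0) (τ : ℝ) :
    ∫ u in 0..τ, (1 - exp (-(a * u))) = τ - (1 - exp (-(a * τ))) / a := by
  have hderiv : ∀ u ∈ uIcc 0 τ, HasDerivAt (fun u => u + exp (-(a * u)) / a)
      (1 - exp (-(a * u))) u := fun u _ => by
    exact ((hasDerivAt_id u).add ((hasDerivAt_exp_neg_mul a u).div_const a)).congr_deriv
      (by field_simp; ring)
  rw [intervalIntegral.integral_eq_sub_of_hasDerivAt hderiv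
    ((by fun_prop : Continuous _).intervalIntegrable _ _)]
  simp only [mul_zero, neg_zero, exp_zero]
  ring

lemma integral_exp_neg_mul_sub_sub_exp_neg_mul {a : ℝ} (ha : a ≠ 0) (τ s t : ℝ) :
    ∫ u in s..t, (exp (-(a * (u - τ))) - exp (-(a * u))) =
      (exp (-(a * (s - τ))) - exp (-(a * s)) - (exp (-(a * (t - τ))) - exp (-(a * t)))) / a := by
  rw [intervalIntegral.integral_eq_sub_of_hasDerivAt
    (fun u _ => hasDerivAt_exp_neg_mul_sub_sub_exp_neg_mul ha τ u)
    ((by fun_prop : Continuous _).intervalIntegrable _ _)]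
  ring

lemma integrableOn_and_integral_Ioi_exp_neg_mul_sub_sub_exp_neg_mul {a τ : ℝ} (ha : 0 < a)
    (hτ : 0 ≤ τ) (s : ℝ) :
    IntegrableOn (fun u => exp (-(a * (u - τ))) - exp (-(a * u))) (Ioi s) ∧
      ∫ u in Ioi s, (exp (-(a * (u - τ))) - exp (-(a * u))) =
        (exp (-(a * (s - τ))) - exp (-(a * s))) / a := by
  have hderiv := fun u (_ : u ∈ Ici s) => hasDerivAt_exp_neg_mul_sub_sub_exp_neg_mul ha.ne' τ u
  have hnonneg := fun u (_ : u ∈ Ioi s) => exp_neg_mul_sub_sub_exp_neg_mul_nonneg ha.le hτ u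
  have hlim : Tendsto (fun u => -(exp (-(a * (u - τ))) - exp (-(a * u))) / a) atTop (𝓝 0) := by
    have h : Tendsto (fun u => exp (-(a * u))) atTop (𝓝 0) :=
      tendsto_exp_atBot.comp (tendsto_neg_atTop_atBot.comp (tendsto_id.const_mul_atTop ha))
    have h' : Tendsto (fun u => exp (-(a * (u - τ)))) atTop (𝓝 0) :=
      h.comp (tendsto_atTop_add_const_right _ (-τ) tendsto_id)
    simpa using ((h'.sub h).neg.div_const a)
  refine ⟨integrableOn_Ioi_deriv_of_nonneg' hderiv hnonneg hlim, ?_⟩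
  rw [integral_Ioi_of_hasDerivAt_of_nonneg' hderiv hnonneg hlim]
  ring

section ModalSeries

variable {c a : ℕ → ℝ} {τ T : ℝ}

lemma continuousOn_tsum_mul {α : Type*} [TopologicalSpace α] {s : Set α} {φ : ℕ → α → ℝ}
    (hc : Summable fun n => |c n|) (hφ : ∀ n, Continuous (φ n))
    (hφ1 : ∀ n, ∀ x ∈ s, |φ n x| ≤ 1) :
    ContinuousOn (fun x => ∑' n, c n * φ n x) s :=
  continuousOn_tsum (fun n => (continuous_const.mul (hφ n)).continuousOn) hc fun n x hx => by
    rw [norm_mul, Real.norm_eq_abs, Real.norm_eq_abs]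
    exact mul_le_of_le_one_right (abs_nonneg _) (hφ1 n x hx)

lemma integrableOn_Ioc_tsum_one_sub_exp (hc : Summable fun n => |c n|) (ha : ∀ n, 0 < a n) :
    IntegrableOn (fun u => ∑' n, c n * (1 - exp (-(a n * u)))) (Ioc 0 τ) := by
  refine (continuousOn_tsum_mul hc (fun n => by fun_prop) fun n u hu => ?_).integrableOn_Icc
    |>.mono_set Ioc_subset_Icc_self
  have h := one_sub_exp_neg_mul_mem_Icc (ha n).le hu.1
  exact (abs_of_nonneg h.1).trans_le h.2

lemma integrableOn_Ioc_tsum_exp_sub_exp (hc : Summable fun n => |c n|) (ha : ∀ n, 0 < a n)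
    (hτ : 0 ≤ τ) :
    IntegrableOn (fun u => ∑' n, c n * (exp (-(a n * (u - τ))) - exp (-(a n * u)))) (Ioc τ T) := by
  refine (continuousOn_tsum_mul hc (fun n => by fun_prop) fun n u hu => ?_).integrableOn_Icc
    |>.mono_set Ioc_subset_Icc_self
  rw [abs_of_nonneg (exp_neg_mul_sub_sub_exp_neg_mul_nonneg (ha n).le hτ u)]
  exact (exp_neg_mul_sub_sub_exp_neg_mul_le (ha n).le hτ hu.1).trans
    (one_sub_exp_neg_mul_mem_Icc (ha n).le hτ).2

lemma hasSum_integral_Ioc_tsum_one_sub_exp (hc : Summable fun n => |c n|) (ha : ∀ n, 0 < a n)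
    (hτ : 0 ≤ τ) :
    HasSum (fun n => c n * (τ - (1 - exp (-(a n * τ))) / a n))
      (∫ u in Ioc 0 τ, ∑' n, c n * (1 - exp (-(a n * u)))) := by
  have hval : ∀ n, ∫ u in Ioc 0 τ, (1 - exp (-(a n * u))) = τ - (1 - exp (-(a n * τ))) / a n :=
    fun n => by rw [← intervalIntegral.integral_of_le hτ, integral_one_sub_exp_neg_mul (ha n).ne']
  have hnonneg : ∀ n u, 0 ≤ u → 0 ≤ 1 - exp (-(a n * u)) := fun n u hu =>
    (one_sub_exp_neg_mul_mem_Icc (ha n).le hu).1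
  have h := hasSum_integral_tsum_mul (M := τ) hc
    (fun n => (by fun_prop : Continuous fun u => 1 - exp (-(a n * u))).integrableOn_Ioc)
    (fun n => ae_restrict_of_forall_mem measurableSet_Ioc fun u hu => hnonneg n u hu.1.le)
    (fun n => (hval n).trans_le (sub_le_self _ (div_nonneg (hnonneg n τ hτ) (ha n).le)))
  simpa only [hval] using h

lemma hasSum_integral_Ioc_tsum_exp_sub_exp (hc : Summable fun n => |c n|) (ha : ∀ n, 0 < a n)
    (hτ : 0 ≤ τ) (hτT : τ ≤ T) :
    HasSum (fun n =>
        c n * ((1 - exp (-(a n * τ)) - (exp (-(a n * (T - τ))) - exp (-(a n * T)))) / a n))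
      (∫ u in Ioc τ T, ∑' n, c n * (exp (-(a n * (u - τ))) - exp (-(a n * u)))) := by
  have hval : ∀ n, ∫ u in Ioc τ T, (exp (-(a n * (u - τ))) - exp (-(a n * u))) =
      (1 - exp (-(a n * τ)) - (exp (-(a n * (T - τ))) - exp (-(a n * T)))) / a n := fun n => by
    rw [← intervalIntegral.integral_of_le hτT,
      integral_exp_neg_mul_sub_sub_exp_neg_mul (ha n).ne', sub_self, mul_zero, neg_zero, exp_zero]
  have hbound :
      ∀ n, (1 - exp (-(a n * τ)) - (exp (-(a n * (T - τ))) - exp (-(a n * T)))) / a n ≤ τ :=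
    fun n => (div_le_div_of_nonneg_right
      (sub_le_self _ (exp_neg_mul_sub_sub_exp_neg_mul_nonneg (ha n).le hτ T)) (ha n).le).trans
        (one_sub_exp_neg_mul_div_le (ha n))
  have h := hasSum_integral_tsum_mul (M := τ) hc
    (fun n => (by fun_prop : Continuous fun u =>
      exp (-(a n * (u - τ))) - exp (-(a n * u))).integrableOn_Ioc)
    (fun n => ae_restrict_of_forall_mem measurableSet_Ioc fun u _ =>
      exp_neg_mul_sub_sub_exp_neg_mul_nonneg (ha n).le hτ u)
    (fun n => (hval n).trans_le (hbound n))
  simpa only [hval] using h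

lemma hasSum_integral_Ioi_tsum_exp_sub_exp (hc : Summable fun n => |c n|) (ha : ∀ n, 0 < a n)
    (hτ : 0 ≤ τ) (hτT : τ ≤ T) :
    HasSum (fun n => c n * ((exp (-(a n * (T - τ))) - exp (-(a n * T))) / a n))
      (∫ u in Ioi T, ∑' n, c n * (exp (-(a n * (u - τ))) - exp (-(a n * u)))) := by
  have hmode := fun n => integrableOn_and_integral_Ioi_exp_neg_mul_sub_sub_exp_neg_mul (ha n) hτ T
  have hbound : ∀ n, (exp (-(a n * (T - τ))) - exp (-(a n * T))) / a n ≤ τ :=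
    fun n => (div_le_div_of_nonneg_right
      (exp_neg_mul_sub_sub_exp_neg_mul_le (ha n).le hτ hτT) (ha n).le).trans
        (one_sub_exp_neg_mul_div_le (ha n))
  have h := hasSum_integral_tsum_mul (M := τ) hc
    (fun n => (hmode n).1)
    (fun n => ae_restrict_of_forall_mem measurableSet_Ioi fun u _ =>
      exp_neg_mul_sub_sub_exp_neg_mul_nonneg (ha n).le hτ u)
    (fun n => (hmode n).2.trans_le (hbound n))
  simpa only [(hmode _).2] using h

end ModalSeries

lemma intervalIntegrable_and_integral_eq_add_of_eqOn_Ioc {f g h : ℝ → ℝ} {a b c : ℝ}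
    (hab : a ≤ b) (hbc : b ≤ c)
    (hg : IntegrableOn g (Ioc a b)) (hh : IntegrableOn h (Ioc b c))
    (hfg : EqOn f g (Ioc a b)) (hfh : EqOn f h (Ioc b c)) :
    IntervalIntegrable f volume a c ∧
      ∫ u in a..c, f u = (∫ u in Ioc a b, g u) + ∫ u in Ioc b c, h u := by
  have hf₁ : IntegrableOn f (Ioc a b) := hg.congr_fun hfg.symm measurableSet_Ioc
  have hf₂ : IntegrableOn f (Ioc b c) := hh.congr_fun hfh.symm measurableSet_Ioc
  refine ⟨(intervalIntegrable_iff_integrableOn_Ioc_of_le (hab.trans hbc)).2 ?_, ?_⟩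
  · rw [← Ioc_union_Ioc_eq_Ioc hab hbc]
    exact hf₁.union hf₂
  · rw [intervalIntegral.integral_of_le (hab.trans hbc), ← Ioc_union_Ioc_eq_Ioc hab hbc,
      setIntegral_union (Ioc_disjoint_Ioc_of_le le_rfl) measurableSet_Ioc hf₁ hf₂,
      setIntegral_congr_fun measurableSet_Ioc hfg, setIntegral_congr_fun measurableSet_Ioc hfh]

theorem stmt_18_general
    (μ Nv Dv : ℝ)
    (hμ : 0 < μ) (hNv : 0 < Nv) (hDv : 0 < Dv)
    (τ : ℝ) (hτ : τ = Nv / μ)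
    (C : ℝ)
    (lam : ℕ → ℝ) (hlam : ∀ n, 0 < lam n)
    (c : ℕ → ℝ)
    (hsum : Summable fun n => |c n|)
    (fc1 : ℝ → ℝ)
    (hfc1 : ∀ t, fc1 t = C * ∑' n, c n * (1 - Real.exp (-(Dv * lam n ^ 2 * t))))
    (fc2 : ℝ → ℝ)
    (hfc2 : ∀ t, fc2 t = C * ∑' n, c n *
          (Real.exp (-(Dv * lam n ^ 2 * (t - τ))) - Real.exp (-(Dv * lam n ^ 2 * t))))
    (Dσ kd γ w : ℝ) (hDσ : 0 < Dσ) (hkd : 0 < kd) (hγ : 0 < γ)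
    (ζ : ℝ) (hζdef : ζ = γ ^ 2 * Dσ - kd)
    (H : ℝ → ℝ)
    (hH : ∀ t, 0 < t → H t = w / Real.sqrt (kd * Dσ) * erf (Real.sqrt (kd * t)) -
          w * γ / ζ * (Real.exp (ζ * t) * erfc (γ * Real.sqrt (Dσ * t)) +
            γ * Real.sqrt (Dσ / kd) * erf (Real.sqrt (kd * t)) - 1))
    (Hinf : ℝ)
    (hHinf : Hinf = w / Real.sqrt (Dσ * kd) - w * γ ^ 2 / ζ * Real.sqrt (Dσ / kd) + w * γ / ζ)
    (tHat : ℝ) (h1 : τ < tHat)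
    (fhat : ℝ → ℝ)
    (hfa : ∀ u, 0 < u → u ≤ τ → fhat u = fc1 u)
    (hfb : ∀ u, τ < u → u ≤ tHat → fhat u = fc2 u)
    (hfz : ∀ u, tHat < u → fhat u = 0) :
    Tendsto (fun t => (∫ u in (0:ℝ)..t, fhat u * H (t - u)) + ∫ x in Set.Ioi tHat, fc2 x) atTop
      (𝓝 (C * ∑' n, c n * (Hinf * τ + (1 - Hinf) *
        (Real.exp (-(Dv * lam n ^ 2 * (tHat - τ))) - Real.exp (-(Dv * lam n ^ 2 * tHat))) /
          (Dv * lam n ^ 2)))) := by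
  have hτ0 : 0 < τ := hτ ▸ div_pos hNv hμ
  have ha : ∀ n, 0 < Dv * lam n ^ 2 := fun n => by have := hlam n; positivity
  rw [funext hfc1] at hfa
  rw [funext hfc2] at hfb ⊢
  obtain ⟨hfhat_int, hfhat_eq⟩ := intervalIntegrable_and_integral_eq_add_of_eqOn_Ioc hτ0.le h1.le
    ((integrableOn_Ioc_tsum_one_sub_exp hsum ha).const_mul C)
    ((integrableOn_Ioc_tsum_exp_sub_exp hsum ha hτ0.le).const_mul C)
    (fun u hu => hfa u hu.1 hu.2) (fun u hu => hfb u hu.1 hu.2)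
  have hH_lim : Tendsto H atTop (𝓝 Hinf) := by
    rw [hHinf]
    exact (tendsto_erfKernel_atTop hγ hDσ hkd hζdef).congr' <|
      (eventually_gt_atTop 0).mono fun t ht => (hH t ht).symm
  have hconv := tendsto_intervalIntegral_mul_comp_sub (h1.trans' hτ0).le hfhat_int hfz
    ((continuous_erfKernel w γ Dσ kd ζ).continuousOn.congr fun t ht => hH t ht) hH_lim
  have hS1 := (hasSum_integral_Ioc_tsum_one_sub_exp hsum ha hτ0.le).mul_left C
  have hS2 := (hasSum_integral_Ioc_tsum_exp_sub_exp hsum ha hτ0.le h1.le).mul_left C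
  have hS3 := (hasSum_integral_Ioi_tsum_exp_sub_exp hsum ha hτ0.le h1.le).mul_left C
  rw [hfhat_eq, integral_const_mul, integral_const_mul] at hconv
  rw [integral_const_mul, ← tsum_mul_left]
  convert hconv.add_const _ using 2
  exact HasSum.tsum_eq <| (((hS1.add hS2).mul_right Hinf).add hS3).congr_fun fun n => by ring

theorem stmt_18
    (rT kf μ Nv Dv : ℝ)
    (hrT : 0 < rT) (hkf : 0 < kf) (hμ : 0 < μ) (hNv : 0 < Nv) (hDv : 0 < Dv)
    (τ : ℝ) (hτ : τ = Nv / μ)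
    (C : ℝ) (hCdef : C = 4 * rT ^ 2 * kf * μ / (Nv * Dv))
    (lam : ℕ → ℝ) (hlam : ∀ n, 0 < lam n)
    (hne : ∀ n, 2 * lam n * rT ≠ Real.sin (2 * lam n * rT))
    (c : ℕ → ℝ)
    (hc : ∀ n, c n = lam n * (Real.sin (lam n * rT) / (lam n * rT)) /
          (2 * lam n * rT - Real.sin (2 * lam n * rT)))
    (hsum : Summable fun n => |c n|)
    (fc1 : ℝ → ℝ)
    (hfc1 : ∀ t, fc1 t = C * ∑' n, c n * (1 - Real.exp (-(Dv * lam n ^ 2 * t))))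
    (fc2 : ℝ → ℝ)
    (hfc2 : ∀ t, fc2 t = C * ∑' n, c n *
          (Real.exp (-(Dv * lam n ^ 2 * (t - τ))) - Real.exp (-(Dv * lam n ^ 2 * t))))
    (Dσ kd γ w : ℝ) (hDσ : 0 < Dσ) (hkd : 0 < kd) (hγ : 0 < γ)
    (ζ : ℝ) (hζdef : ζ = γ ^ 2 * Dσ - kd) (hζ : ζ ≠ 0)
    (H : ℝ → ℝ)
    (hH : ∀ t, 0 < t → H t = w / Real.sqrt (kd * Dσ) * erf (Real.sqrt (kd * t)) -
          w * γ / ζ * (Real.exp (ζ * t) * erfc (γ * Real.sqrt (Dσ * t)) +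
            γ * Real.sqrt (Dσ / kd) * erf (Real.sqrt (kd * t)) - 1))
    (Hinf : ℝ)
    (hHinf : Hinf = w / Real.sqrt (Dσ * kd) - w * γ ^ 2 / ζ * Real.sqrt (Dσ / kd) + w * γ / ζ)
    (tHat : ℝ) (h1 : τ < tHat)
    (fhat : ℝ → ℝ)
    (hfa : ∀ u, 0 < u → u ≤ τ → fhat u = fc1 u)
    (hfb : ∀ u, τ < u → u ≤ tHat → fhat u = fc2 u)
    (hfz : ∀ u, tHat < u → fhat u = 0) :
    Tendsto (fun t => (∫ u in (0:ℝ)..t, fhat u * H (t - u)) + ∫ x in Set.Ioi tHat, fc2 x) atTop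
      (𝓝 (C * ∑' n, c n * (Hinf * τ + (1 - Hinf) *
        (Real.exp (-(Dv * lam n ^ 2 * (tHat - τ))) - Real.exp (-(Dv * lam n ^ 2 * tHat))) /
          (Dv * lam n ^ 2)))) :=
  stmt_18_general μ Nv Dv hμ hNv hDv τ hτ C lam hlam c hsum fc1 hfc1 fc2 hfc2 Dσ kd γ w hDσ hkd hγ ζ
    hζdef H hH Hinf hHinf tHat h1 fhat hfa hfb hfz
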